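/- Relative entropy identity comparing a viscous and an inviscid solution: Let u be a smooth solution of ∂_t A(u) + Σ_α ∂_{x_α} F_α(u) = ε Σ_{α,β} ∂_{x_α}(B_{αβ}(u) ∂_{x_β} u) and ū a smooth solution of ∂_t A(ū) + Σ_α ∂_{x_α} F_α(ū) = 0, under hypotheses (H1) and (H2), with u satisfying the entropy identity for the viscous system and ū the entropy conservation identity. Then the following identity holds pointwise: ∂_t η(u|ū) + Σ_α ∂_{x_α}[q_α(u|ū) − ε (G(u) − G(ū)) · Σ_β B_{αβ}(u) ∂_{x_β} u] + ε Σ_{α,β} ∇G(u) ∂_{x_α} u · B_{αβ}(u) ∂_{x_β} u = − Σ_α ∂_{x_α}(G(ū)) · F_α(u|ū) + ε Σ_{α,β} ∂_{x_α}(G(ū)) · B_{αβ}(u) ∂_{x_β} u. -/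

import Mathlib

open scoped RealInnerProductSpace

/-!
Expanding the derivatives of `η(u|ū)` and of the relative fluxes by the product rule, the
entropy identities of `u` and `ū` absorb every term containing `η` or `q_α`, and the difference of
the two systems, paired with `G(ū)`, absorbs the terms `G(ū) · ∂(A(u) - A(ū))` and
`G(ū) · ∂(F_α(u) - F_α(ū))`. What remains is `-∂_t G(ū) · (A(u) - A(ū))` against
`Σ_α ∂_α G(ū) · ∇F_α(ū) ∇A(ū)⁻¹ (A(u) - A(ū))`. These agree because differentiating (H2) makes
`(ξ, ζ) ↦ ∇G ζ · ∇A ξ` and `(ξ, ζ) ↦ ∇G ζ · ∇F_α ξ` symmetric, which moves `∇A(ū)⁻¹` across the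
pairing, after which the inviscid system turns `Σ_α ∇F_α(ū) ∂_α ū` into `-∇A(ū) ∂_t ū`.
-/

variable {E : Type*} [NormedAddCommGroup E] [InnerProductSpace ℝ E]

theorem inner_fderiv_comm_of_fderiv_eq_inner {A G : E → E} {η : E → ℝ} {w : E}
    (hA : ContDiff ℝ 2 A) (hη : ContDiff ℝ 2 η) (hG : DifferentiableAt ℝ G w)
    (h : ∀ v ξ, fderiv ℝ η v ξ = ⟪G v, fderiv ℝ A v ξ⟫) (ξ ζ : E) :
    ⟪fderiv ℝ G w ζ, fderiv ℝ A w ξ⟫ = ⟪fderiv ℝ G w ξ, fderiv ℝ A w ζ⟫ := by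
  have hA' : DifferentiableAt ℝ (fderiv ℝ A) w :=
    (hA.fderiv_right (m := 1) le_rfl).differentiable one_ne_zero w
  have hη' : DifferentiableAt ℝ (fderiv ℝ η) w :=
    (hη.fderiv_right (m := 1) le_rfl).differentiable one_ne_zero w
  -- differentiate `v ↦ ∇η(v) ξ = ⟪G v, ∇A(v) ξ⟫` in the direction `ζ`
  have hess : ∀ ξ ζ : E, fderiv ℝ (fderiv ℝ η) w ζ ξ
      = ⟪fderiv ℝ G w ζ, fderiv ℝ A w ξ⟫ + ⟪G w, fderiv ℝ (fderiv ℝ A) w ζ ξ⟫ := by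
    intro ξ ζ
    have hηξ := congrArg (· ζ) (fderiv_clm_apply hη' (differentiableAt_const ξ))
    rw [funext (h · ξ)] at hηξ
    simp only [fderiv_inner_apply ℝ hG (hA'.clm_apply (differentiableAt_const ξ)),
      fderiv_clm_apply hA' (differentiableAt_const ξ), fderiv_fun_const, Pi.zero_apply,
      ContinuousLinearMap.comp_zero, zero_add, ContinuousLinearMap.flip_apply] at hηξ
    linarith
  have hη2 := (hη.contDiffAt (x := w)).isSymmSndFDerivAt (by simp) ζ ξ
  have hA2 := (hA.contDiffAt (x := w)).isSymmSndFDerivAt (by simp) ζ ξ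
  calc ⟪fderiv ℝ G w ζ, fderiv ℝ A w ξ⟫
      = fderiv ℝ (fderiv ℝ η) w ζ ξ - ⟪G w, fderiv ℝ (fderiv ℝ A) w ζ ξ⟫ := by rw [hess]; ring
    _ = fderiv ℝ (fderiv ℝ η) w ξ ζ - ⟪G w, fderiv ℝ (fderiv ℝ A) w ξ ζ⟫ := by rw [hη2, hA2]
    _ = ⟪fderiv ℝ G w ξ, fderiv ℝ A w ζ⟫ := by rw [hess]; ring

theorem sum_inner_apply_ringInverse_eq_neg_inner {ι : Type*} [Fintype ι]
    {g L : E →L[ℝ] E} {M : ι → E →L[ℝ] E} (hL : IsUnit L)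
    (hgL : ∀ ξ ζ, ⟪g ζ, L ξ⟫ = ⟪g ξ, L ζ⟫) (hgM : ∀ α ξ ζ, ⟪g ζ, M α ξ⟫ = ⟪g ξ, M α ζ⟫)
    {ξ : ι → E} {τ : E} (h : ∑ α, M α (ξ α) = -L τ) (a : E) :
    ∑ α, ⟪g (ξ α), M α (Ring.inverse L a)⟫ = -⟪g τ, a⟫ := by
  set b := Ring.inverse L a
  have hb : L b = a := congrArg (· a) (Ring.mul_inverse_cancel L hL)
  calc ∑ α, ⟪g (ξ α), M α b⟫ = ∑ α, ⟪g b, M α (ξ α)⟫ :=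
        Finset.sum_congr rfl fun α _ => hgM α b (ξ α)
    _ = ⟪g b, ∑ α, M α (ξ α)⟫ := (inner_sum _ _ _).symm
    _ = -⟪g b, L τ⟫ := by rw [h, inner_neg_right]
    _ = -⟪g τ, a⟫ := by rw [hgL τ b, hb]

variable {X : Type*} [NormedAddCommGroup X] [NormedSpace ℝ X]

section

variable {f g : X → ℝ} {P Q R S V : X → E} {x : X}

theorem fderiv_sub_sub_inner_sub_apply (hf : DifferentiableAt ℝ f x)
    (hg : DifferentiableAt ℝ g x) (hP : DifferentiableAt ℝ P x) (hQ : DifferentiableAt ℝ Q x)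
    (hR : DifferentiableAt ℝ R x) (v : X) :
    fderiv ℝ (fun y => f y - g y - ⟪P y, Q y - R y⟫) x v
      = fderiv ℝ f x v - fderiv ℝ g x v
        - (⟪P x, fderiv ℝ Q x v - fderiv ℝ R x v⟫ + ⟪fderiv ℝ P x v, Q x - R x⟫) := by
  rw [fderiv_fun_sub (hf.fun_sub hg) (hP.inner ℝ (hQ.fun_sub hR)), fderiv_fun_sub hf hg]
  simp only [sub_apply]
  rw [fderiv_inner_apply ℝ hP (hQ.fun_sub hR), fderiv_fun_sub hQ hR]
  rfl

theorem fderiv_sub_sub_inner_sub_sub_mul_inner_sub_apply (hf : DifferentiableAt ℝ f x)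
    (hg : DifferentiableAt ℝ g x) (hP : DifferentiableAt ℝ P x) (hQ : DifferentiableAt ℝ Q x)
    (hR : DifferentiableAt ℝ R x) (hS : DifferentiableAt ℝ S x) (hV : DifferentiableAt ℝ V x)
    (c : ℝ) (v : X) :
    fderiv ℝ (fun y => f y - g y - ⟪P y, Q y - R y⟫ - c * ⟪S y - P y, V y⟫) x v
      = fderiv ℝ f x v - fderiv ℝ g x v
        - (⟪P x, fderiv ℝ Q x v - fderiv ℝ R x v⟫ + ⟪fderiv ℝ P x v, Q x - R x⟫)
        - c * (fderiv ℝ (fun y => ⟪S y, V y⟫) x v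
          - (⟪P x, fderiv ℝ V x v⟫ + ⟪fderiv ℝ P x v, V x⟫)) := by
  have hSV := hS.inner ℝ hV
  have hPV := hP.inner ℝ hV
  simp_rw [inner_sub_left]
  rw [fderiv_fun_sub ((hf.fun_sub hg).fun_sub (hP.inner ℝ (hQ.fun_sub hR)))
      ((hSV.fun_sub hPV).const_mul c), fderiv_const_mul (hSV.fun_sub hPV), fderiv_fun_sub hSV hPV]
  simp only [sub_apply, smul_apply, smul_eq_mul]
  rw [fderiv_sub_sub_inner_sub_apply hf hg hP hQ hR, fderiv_inner_apply ℝ hP hV]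

end

theorem sum_inner_fderiv_comp_ringInverse_eq_neg_inner_deriv {ι : Type*} [Fintype ι]
    {η : E → ℝ} {q : ι → E → ℝ} {A G : E → E} {F : ι → E → E}
    {w : ℝ → X → E} {e : ι → X} {t : ℝ} {x : X}
    (hA : ContDiff ℝ 2 A) (hF : ∀ α, ContDiff ℝ 2 (F α)) (hη : ContDiff ℝ 2 η)
    (hq : ∀ α, ContDiff ℝ 2 (q α)) (hG : DifferentiableAt ℝ G (w t x))
    (hηA : ∀ v ξ, fderiv ℝ η v ξ = ⟪G v, fderiv ℝ A v ξ⟫)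
    (hqF : ∀ α v ξ, fderiv ℝ (q α) v ξ = ⟪G v, fderiv ℝ (F α) v ξ⟫)
    (hwt : DifferentiableAt ℝ (fun s => w s x) t) (hwx : DifferentiableAt ℝ (w t) x)
    (hunit : IsUnit (fderiv ℝ A (w t x)))
    (hw : deriv (fun s => A (w s x)) t + ∑ α, fderiv ℝ (fun y => F α (w t y)) x (e α) = 0)
    (a : E) :
    ∑ α, ⟪fderiv ℝ (fun y => G (w t y)) x (e α),
        fderiv ℝ (F α) (w t x) (Ring.inverse (fderiv ℝ A (w t x)) a)⟫
      = -⟪deriv (fun s => G (w s x)) t, a⟫ := by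
  rw [show deriv (fun s => A (w s x)) t = _ from
    fderiv_comp_deriv t (hA.differentiable two_ne_zero _) hwt] at hw
  simp only [fderiv_fun_comp x ((hF _).differentiable two_ne_zero _) hwx,
    ContinuousLinearMap.comp_apply] at hw
  rw [show deriv (fun s => G (w s x)) t = _ from fderiv_comp_deriv t hG hwt]
  simp only [fderiv_fun_comp x hG hwx, ContinuousLinearMap.comp_apply]
  exact sum_inner_apply_ringInverse_eq_neg_inner hunit
    (inner_fderiv_comm_of_fderiv_eq_inner hA hη hG hηA)
    (fun α => inner_fderiv_comm_of_fderiv_eq_inner (hF α) (hq α) hG (hqF α))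
    (eq_neg_of_add_eq_zero_right hw) a

theorem relative_entropy_identity_viscous_vs_inviscid_general
    (n d : ℕ)
    (A : EuclideanSpace ℝ (Fin n) → EuclideanSpace ℝ (Fin n))
    (F : Fin d → EuclideanSpace ℝ (Fin n) → EuclideanSpace ℝ (Fin n))
    (B : Fin d → Fin d → EuclideanSpace ℝ (Fin n) →
      (EuclideanSpace ℝ (Fin n) →L[ℝ] EuclideanSpace ℝ (Fin n)))
    (η : EuclideanSpace ℝ (Fin n) → ℝ)
    (q : Fin d → EuclideanSpace ℝ (Fin n) → ℝ)
    (G : EuclideanSpace ℝ (Fin n) → EuclideanSpace ℝ (Fin n))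
    -- smoothness of the constitutive functions
    (hAreg : ContDiff ℝ 2 A) (hFreg : ∀ α, ContDiff ℝ (⊤ : ℕ∞) (F α))
    (hBreg : ∀ α β, ContDiff ℝ (⊤ : ℕ∞) (B α β))
    (hηreg : ContDiff ℝ (⊤ : ℕ∞) η) (hqreg : ∀ α, ContDiff ℝ (⊤ : ℕ∞) (q α))
    (hGreg : ContDiff ℝ (⊤ : ℕ∞) G)
    -- (H1)
    (hH1' : ∀ w, Function.Bijective (fderiv ℝ A w))
    -- (H2)
    (hH2η : ∀ w ξ, fderiv ℝ η w ξ = ⟪G w, fderiv ℝ A w ξ⟫)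
    (hH2q : ∀ α w ξ, fderiv ℝ (q α) w ξ = ⟪G w, fderiv ℝ (F α) w ξ⟫)
    (ε : ℝ)
    -- smooth solution of the viscous system
    (u : ℝ → (Fin d → ℝ) → EuclideanSpace ℝ (Fin n))
    (hureg : ContDiff ℝ (⊤ : ℕ∞) (fun pz : ℝ × (Fin d → ℝ) => u pz.1 pz.2))
    (hupde : ∀ t x,
      deriv (fun s => A (u s x)) t
        + ∑ α, fderiv ℝ (fun y => F α (u t y)) x (Pi.single α 1)
      = ε • ∑ α, fderiv ℝ
          (fun y => ∑ β, B α β (u t y) (fderiv ℝ (u t) y (Pi.single β 1)))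
          x (Pi.single α 1))
    -- entropy identity for the viscous solution
    (huent : ∀ t x,
      deriv (fun s => η (u s x)) t
        + ∑ α, fderiv ℝ (fun y => q α (u t y)) x (Pi.single α 1)
      = ε * (∑ α, fderiv ℝ
              (fun y => ⟪G (u t y),
                  ∑ β, B α β (u t y) (fderiv ℝ (u t) y (Pi.single β 1))⟫)
              x (Pi.single α 1))
        - ε * ∑ α, ∑ β,
            ⟪fderiv ℝ G (u t x) (fderiv ℝ (u t) x (Pi.single α 1)),
              B α β (u t x) (fderiv ℝ (u t) x (Pi.single β 1))⟫)
    -- smooth solution of the inviscid system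
    (ubar : ℝ → (Fin d → ℝ) → EuclideanSpace ℝ (Fin n))
    (hubarreg : ContDiff ℝ (⊤ : ℕ∞) (fun pz : ℝ × (Fin d → ℝ) => ubar pz.1 pz.2))
    (hubarpde : ∀ t x,
      deriv (fun s => A (ubar s x)) t
        + ∑ α, fderiv ℝ (fun y => F α (ubar t y)) x (Pi.single α 1) = 0)
    -- entropy conservation identity for the inviscid solution
    (hubarent : ∀ t x,
      deriv (fun s => η (ubar s x)) t
        + ∑ α, fderiv ℝ (fun y => q α (ubar t y)) x (Pi.single α 1) = 0) :
    ∀ t x,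
      deriv (fun s => η (u s x) - η (ubar s x)
          - ⟪G (ubar s x), A (u s x) - A (ubar s x)⟫) t
        + ∑ α, fderiv ℝ (fun y =>
            (q α (u t y) - q α (ubar t y)
              - ⟪G (ubar t y), F α (u t y) - F α (ubar t y)⟫)
            - ε * ⟪G (u t y) - G (ubar t y),
                ∑ β, B α β (u t y) (fderiv ℝ (u t) y (Pi.single β 1))⟫)
            x (Pi.single α 1)
        + ε * ∑ α, ∑ β,
            ⟪fderiv ℝ G (u t x) (fderiv ℝ (u t) x (Pi.single α 1)),
              B α β (u t x) (fderiv ℝ (u t) x (Pi.single β 1))⟫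
      = - (∑ α, ⟪fderiv ℝ (fun y => G (ubar t y)) x (Pi.single α 1),
            F α (u t x) - F α (ubar t x)
              - (fderiv ℝ (F α) (ubar t x))
                  (Ring.inverse (fderiv ℝ A (ubar t x))
                    (A (u t x) - A (ubar t x)))⟫)
        + ε * ∑ α, ∑ β,
            ⟪fderiv ℝ (fun y => G (ubar t y)) x (Pi.single α 1),
              B α β (u t x) (fderiv ℝ (u t) x (Pi.single β 1))⟫ := by
  intro t x
  have h2 : ((2 : ℕ∞) : WithTop ℕ∞) ≤ ((⊤ : ℕ∞) : WithTop ℕ∞) := WithTop.coe_le_coe.mpr le_top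
  have hA : Differentiable ℝ A := hAreg.differentiable two_ne_zero
  have hF : ∀ α, Differentiable ℝ (F α) := fun α => (hFreg α).differentiable (by simp)
  have hB : ∀ α β, Differentiable ℝ (B α β) := fun α β => (hBreg α β).differentiable (by simp)
  have hη : Differentiable ℝ η := hηreg.differentiable (by simp)
  have hq : ∀ α, Differentiable ℝ (q α) := fun α => (hqreg α).differentiable (by simp)
  have hG : Differentiable ℝ G := hGreg.differentiable (by simp)
  have hut : ContDiff ℝ (⊤ : ℕ∞) (u t) := hureg.comp (contDiff_prodMk_right t)
  have hu : Differentiable ℝ (u t) := hut.differentiable (by simp)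
  have hDu : Differentiable ℝ (fderiv ℝ (u t)) :=
    (hut.fderiv_right (m := 1) h2).differentiable one_ne_zero
  have hubt : Differentiable ℝ (ubar t) :=
    (hubarreg.comp (contDiff_prodMk_right t)).differentiable (by simp)
  have hux : Differentiable ℝ (fun s => u s x) :=
    (hureg.comp (contDiff_prodMk_left x)).differentiable (by simp)
  have hubx : Differentiable ℝ (fun s => ubar s x) :=
    (hubarreg.comp (contDiff_prodMk_left x)).differentiable (by simp)
  have hV : ∀ α, Differentiable ℝ
      (fun y => ∑ β, B α β (u t y) (fderiv ℝ (u t) y (Pi.single β 1))) := by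
    intro α; fun_prop
  have hsym := sum_inner_fderiv_comp_ringInverse_eq_neg_inner_deriv (e := fun α => Pi.single α 1)
    hAreg (fun α => (hFreg α).of_le h2) (hηreg.of_le h2) (fun α => (hqreg α).of_le h2) (hG _)
    hH2η hH2q (hubx t) (hubt x) (ContinuousLinearMap.isUnit_iff_bijective.mpr (hH1' _))
    (hubarpde t x) (A (u t x) - A (ubar t x))
  have hpair := congrArg (⟪G (ubar t x), ·⟫) (congrArg₂ (· - ·) (hupde t x) (hubarpde t x))
  rw [← fderiv_apply_one_eq_deriv, fderiv_sub_sub_inner_sub_apply (hη.fun_comp hux t)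
    (hη.fun_comp hubx t) (hG.fun_comp hubx t) (hA.fun_comp hux t) (hA.fun_comp hubx t),
    Finset.sum_congr rfl fun α _ => fderiv_sub_sub_inner_sub_sub_mul_inner_sub_apply
      ((hq α).fun_comp hu x) ((hq α).fun_comp hubt x) (hG.fun_comp hubt x)
      ((hF α).fun_comp hu x) ((hF α).fun_comp hubt x) (hG.fun_comp hu x) (hV α x) ε
      (Pi.single α 1)]
  have hentu := huent t x
  simp only [fderiv_apply_one_eq_deriv, inner_sub_right, inner_add_right, inner_sum,
    real_inner_smul_right, sub_zero, Finset.sum_sub_distrib, Finset.sum_add_distrib,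
    ← Finset.mul_sum] at hentu hpair hsym ⊢
  linear_combination hentu - hubarent t x - hpair - hsym

/-- **Relative entropy identity comparing a viscous and an inviscid solution.**
Let `u` be a smooth solution of the viscous system and `ū` a smooth solution of the
inviscid system, under (H1), (H2), each satisfying the corresponding entropy identity.
Then pointwise:
`∂_t η(u|ū) + Σ_α ∂_{x_α}[q_α(u|ū) − ε (G(u) − G(ū)) · Σ_β B_{αβ}(u) ∂_{x_β} u]
  + ε Σ_{α,β} ∇G(u) ∂_{x_α} u · B_{αβ}(u) ∂_{x_β} u
  = − Σ_α ∂_{x_α}(G(ū)) · F_α(u|ū) + ε Σ_{α,β} ∂_{x_α}(G(ū)) · B_{αβ}(u) ∂_{x_β} u`. -/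
theorem relative_entropy_identity_viscous_vs_inviscid
    (n d : ℕ)
    (A : EuclideanSpace ℝ (Fin n) → EuclideanSpace ℝ (Fin n))
    (F : Fin d → EuclideanSpace ℝ (Fin n) → EuclideanSpace ℝ (Fin n))
    (B : Fin d → Fin d → EuclideanSpace ℝ (Fin n) →
      (EuclideanSpace ℝ (Fin n) →L[ℝ] EuclideanSpace ℝ (Fin n)))
    (η : EuclideanSpace ℝ (Fin n) → ℝ)
    (q : Fin d → EuclideanSpace ℝ (Fin n) → ℝ)
    (G : EuclideanSpace ℝ (Fin n) → EuclideanSpace ℝ (Fin n))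
    -- smoothness of the constitutive functions
    (hAreg : ContDiff ℝ 2 A) (hFreg : ∀ α, ContDiff ℝ (⊤ : ℕ∞) (F α))
    (hBreg : ∀ α β, ContDiff ℝ (⊤ : ℕ∞) (B α β))
    (hηreg : ContDiff ℝ (⊤ : ℕ∞) η) (hqreg : ∀ α, ContDiff ℝ (⊤ : ℕ∞) (q α))
    (hGreg : ContDiff ℝ (⊤ : ℕ∞) G)
    -- (H1)
    (hH1 : Function.Bijective A)
    (hH1' : ∀ w, Function.Bijective (fderiv ℝ A w))
    -- (H2)
    (hH2η : ∀ w ξ, fderiv ℝ η w ξ = ⟪G w, fderiv ℝ A w ξ⟫)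
    (hH2q : ∀ α w ξ, fderiv ℝ (q α) w ξ = ⟪G w, fderiv ℝ (F α) w ξ⟫)
    (ε : ℝ) (hε : 0 < ε)
    -- smooth solution of the viscous system
    (u : ℝ → (Fin d → ℝ) → EuclideanSpace ℝ (Fin n))
    (hureg : ContDiff ℝ (⊤ : ℕ∞) (fun pz : ℝ × (Fin d → ℝ) => u pz.1 pz.2))
    (hupde : ∀ t x,
      deriv (fun s => A (u s x)) t
        + ∑ α, fderiv ℝ (fun y => F α (u t y)) x (Pi.single α 1)
      = ε • ∑ α, fderiv ℝ
          (fun y => ∑ β, B α β (u t y) (fderiv ℝ (u t) y (Pi.single β 1)))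
          x (Pi.single α 1))
    -- entropy identity for the viscous solution
    (huent : ∀ t x,
      deriv (fun s => η (u s x)) t
        + ∑ α, fderiv ℝ (fun y => q α (u t y)) x (Pi.single α 1)
      = ε * (∑ α, fderiv ℝ
              (fun y => ⟪G (u t y),
                  ∑ β, B α β (u t y) (fderiv ℝ (u t) y (Pi.single β 1))⟫)
              x (Pi.single α 1))
        - ε * ∑ α, ∑ β,
            ⟪fderiv ℝ G (u t x) (fderiv ℝ (u t) x (Pi.single α 1)),
              B α β (u t x) (fderiv ℝ (u t) x (Pi.single β 1))⟫)
    -- smooth solution of the inviscid system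
    (ubar : ℝ → (Fin d → ℝ) → EuclideanSpace ℝ (Fin n))
    (hubarreg : ContDiff ℝ (⊤ : ℕ∞) (fun pz : ℝ × (Fin d → ℝ) => ubar pz.1 pz.2))
    (hubarpde : ∀ t x,
      deriv (fun s => A (ubar s x)) t
        + ∑ α, fderiv ℝ (fun y => F α (ubar t y)) x (Pi.single α 1) = 0)
    -- entropy conservation identity for the inviscid solution
    (hubarent : ∀ t x,
      deriv (fun s => η (ubar s x)) t
        + ∑ α, fderiv ℝ (fun y => q α (ubar t y)) x (Pi.single α 1) = 0) :
    ∀ t x,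
      deriv (fun s => η (u s x) - η (ubar s x)
          - ⟪G (ubar s x), A (u s x) - A (ubar s x)⟫) t
        + ∑ α, fderiv ℝ (fun y =>
            (q α (u t y) - q α (ubar t y)
              - ⟪G (ubar t y), F α (u t y) - F α (ubar t y)⟫)
            - ε * ⟪G (u t y) - G (ubar t y),
                ∑ β, B α β (u t y) (fderiv ℝ (u t) y (Pi.single β 1))⟫)
            x (Pi.single α 1)
        + ε * ∑ α, ∑ β,
            ⟪fderiv ℝ G (u t x) (fderiv ℝ (u t) x (Pi.single α 1)),
              B α β (u t x) (fderiv ℝ (u t) x (Pi.single β 1))⟫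
      = - (∑ α, ⟪fderiv ℝ (fun y => G (ubar t y)) x (Pi.single α 1),
            F α (u t x) - F α (ubar t x)
              - (fderiv ℝ (F α) (ubar t x))
                  (Ring.inverse (fderiv ℝ A (ubar t x))
                    (A (u t x) - A (ubar t x)))⟫)
        + ε * ∑ α, ∑ β,
            ⟪fderiv ℝ (fun y => G (ubar t y)) x (Pi.single α 1),
              B α β (u t x) (fderiv ℝ (u t) x (Pi.single β 1))⟫ :=
  relative_entropy_identity_viscous_vs_inviscid_general n d A F B η q G hAreg hFreg hBreg hηreg
    hqreg hGreg hH1' hH2η hH2q ε u hureg hupde huent ubar hubarreg hubarpde hubarent
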